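/- Fix 0 < α < 1. For x ∈ ℝ, let z(x) > 0 be the unique number such that Φ(−x − z(x)) = α Φ(−x), i.e., x + z(x) is the (1 − α) quantile of a standard normal distribution truncated to (x, ∞). Then for every x > 1, z(x) ≥ (1 − α)/(4x). -/

import Mathlib

open MeasureTheory ProbabilityTheory

/-- The standard normal cumulative distribution function `Φ`. -/
noncomputable def stdNormalCDF (x : ℝ) : ℝ := ((gaussianReal 0 1) (Set.Iic x)).toReal

lemma stdNormalCDF_eq (y : ℝ) :
    stdNormalCDF y = ∫ t in Set.Iic y, gaussianPDFReal 0 1 t := by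
  rw [stdNormalCDF, gaussianReal_apply_eq_integral 0 one_ne_zero,
    ENNReal.toReal_ofReal]
  exact setIntegral_nonneg measurableSet_Iic fun t _ => gaussianPDFReal_nonneg 0 1 t

lemma stdNormalCDF_sub (a b : ℝ) :
    stdNormalCDF b - stdNormalCDF a = ∫ t in a..b, gaussianPDFReal 0 1 t := by
  rw [stdNormalCDF_eq, stdNormalCDF_eq]
  exact intervalIntegral.integral_Iic_sub_Iic
    ((integrable_gaussianPDFReal 0 1).integrableOn)
    ((integrable_gaussianPDFReal 0 1).integrableOn)

lemma stdNormalCDF_nonneg (y : ℝ) : 0 ≤ stdNormalCDF y := ENNReal.toReal_nonneg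

lemma gpdf_mono {s t : ℝ} (hst : s ≤ t) (ht : t ≤ 0) :
    gaussianPDFReal 0 1 s ≤ gaussianPDFReal 0 1 t := by
  unfold gaussianPDFReal
  refine mul_le_mul_of_nonneg_left ?_ (by positivity)
  refine Real.exp_le_exp.mpr ?_
  have h1 : t^2 ≤ s^2 := by nlinarith [mul_nonneg (sub_nonneg.2 hst) (neg_nonneg.2 ht)]
  have h2 : (0:ℝ) < 2 * (1:NNReal) := by norm_num
  rw [div_le_div_iff_of_pos_right h2]
  nlinarith

lemma integral_le (a b : ℝ) (hab : a ≤ b) (hb : b ≤ 0) :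
    ∫ t in a..b, gaussianPDFReal 0 1 t ≤ (b - a) * gaussianPDFReal 0 1 b := by
  have h := intervalIntegral.integral_mono_on (μ := volume) hab
    ((integrable_gaussianPDFReal 0 1).intervalIntegrable)
    (intervalIntegrable_const (c := gaussianPDFReal 0 1 b))
    (fun t ht => gpdf_mono ht.2 hb)
  simpa using h

lemma integral_ge (a b : ℝ) (hab : a ≤ b) (hb : b ≤ 0) :
    (b - a) * gaussianPDFReal 0 1 a ≤ ∫ t in a..b, gaussianPDFReal 0 1 t := by
  have h := intervalIntegral.integral_mono_on (μ := volume) hab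
    (intervalIntegrable_const (c := gaussianPDFReal 0 1 a))
    ((integrable_gaussianPDFReal 0 1).intervalIntegrable)
    (fun t ht => gpdf_mono ht.1 (le_trans ht.2 hb))
  simpa using h

/-- If `x + z(x)` is the `(1 − α)` quantile of the standard normal distribution truncated
to `(x, ∞)`, i.e. `Φ(−x − z(x)) = α Φ(−x)` with `z(x) > 0`, then `z(x) ≥ (1 − α)/(4x)`
for every `x > 1`. -/
theorem truncated_quantile_lower_bound
    (α : ℝ) (hα : 0 < α) (hα1 : α < 1)
    (z : ℝ → ℝ) (hzpos : ∀ x : ℝ, 0 < z x)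
    (hz : ∀ x : ℝ, stdNormalCDF (-x - z x) = α * stdNormalCDF (-x)) :
    ∀ x : ℝ, 1 < x → z x ≥ (1 - α) / (4 * x) := by
  intro x hx
  have hx0 : (0:ℝ) < x := lt_trans one_pos hx
  set g : ℝ → ℝ := gaussianPDFReal 0 1 with hg
  have hgx : 0 < g (-x) := gaussianPDFReal_pos 0 1 (-x) one_ne_zero
  -- upper bound on the mass difference
  have h1 : stdNormalCDF (-x) - stdNormalCDF (-x - z x) ≤ z x * g (-x) := by
    rw [stdNormalCDF_sub]
    have := integral_le (-x - z x) (-x) (by linarith [hzpos x]) (by linarith)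
    calc ∫ t in (-x - z x)..(-x), g t ≤ (-x - (-x - z x)) * g (-x) := this
      _ = z x * g (-x) := by ring_nf
  -- lower bound on Φ(-x): Φ(-x) ≥ g(-x)/(4x)
  set δ : ℝ := 1 / (2 * x) with hδ
  have hδpos : 0 < δ := by positivity
  have h2 : g (-x) / (4 * x) ≤ stdNormalCDF (-x) := by
    have hsub : stdNormalCDF (-x) - stdNormalCDF (-x - δ) = ∫ t in (-x - δ)..(-x), g t :=
      stdNormalCDF_sub _ _
    have hge : (-x - (-x - δ)) * g (-x - δ) ≤ ∫ t in (-x - δ)..(-x), g t :=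
      integral_ge _ _ (by linarith) (by linarith)
    have hpdfe : g (-x - δ) = (Real.sqrt (2 * Real.pi))⁻¹ *
        Real.exp (-(x + δ)^2 / 2) := by
      simp only [hg, gaussianPDFReal, NNReal.coe_one, mul_one, sub_zero]
      ring_nf
    have hpdfe2 : g (-x) = (Real.sqrt (2 * Real.pi))⁻¹ * Real.exp (-x^2 / 2) := by
      simp only [hg, gaussianPDFReal, NNReal.coe_one, mul_one, sub_zero]
      ring_nf
    -- g(-x-δ) ≥ g(-x)/2
    have hkey : g (-x) / 2 ≤ g (-x - δ) := by
      rw [hpdfe, hpdfe2]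
      have hexp : Real.exp (-x^2/2) / 2 ≤ Real.exp (-(x + δ)^2 / 2) := by
        have hδle : δ ≤ 1/2 := by
          rw [hδ]
          rw [div_le_div_iff₀ (by positivity) (by norm_num)]
          linarith
        have hd2 : δ^2 ≤ 1/4 := by nlinarith
        have hxd : x * δ = 1/2 := by rw [hδ]; field_simp
        have harg : -x^2/2 - 5/8 ≤ -(x + δ)^2 / 2 := by nlinarith
        calc Real.exp (-x^2/2) / 2 = Real.exp (-x^2/2) * (1/2) := by ring
          _ ≤ Real.exp (-x^2/2) * Real.exp (-(5/8)) := by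
              refine mul_le_mul_of_nonneg_left ?_ (Real.exp_nonneg _)
              have hlog : Real.log (1/2) ≤ -(5/8) := by
                have := Real.log_two_gt_d9
                rw [show (1:ℝ)/2 = 2⁻¹ by norm_num, Real.log_inv]
                linarith
              exact (Real.log_le_iff_le_exp (by norm_num)).mp hlog
          _ = Real.exp (-x^2/2 - 5/8) := by rw [← Real.exp_add]; ring_nf
          _ ≤ Real.exp (-(x + δ)^2 / 2) := Real.exp_le_exp.mpr harg
      have hs : (0:ℝ) < (Real.sqrt (2 * Real.pi))⁻¹ := by
        rw [inv_pos]
        exact Real.sqrt_pos.mpr (by positivity)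
      calc (Real.sqrt (2 * Real.pi))⁻¹ * Real.exp (-x^2/2) / 2
          = (Real.sqrt (2 * Real.pi))⁻¹ * (Real.exp (-x^2/2) / 2) := by ring
        _ ≤ (Real.sqrt (2 * Real.pi))⁻¹ * Real.exp (-(x + δ)^2 / 2) := by
            exact mul_le_mul_of_nonneg_left hexp hs.le
    have h0 : 0 ≤ stdNormalCDF (-x - δ) := stdNormalCDF_nonneg _
    have hδg : δ * (g (-x) / 2) = g (-x) / (4 * x) := by
      rw [hδ, div_mul_div_comm, one_mul]
      congr 1
      ring
    have : δ * (g (-x) / 2) ≤ δ * g (-x - δ) := by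
      exact mul_le_mul_of_nonneg_left hkey hδpos.le
    nlinarith [this, hge, hsub, h0]
  -- combine
  have heq : stdNormalCDF (-x) - stdNormalCDF (-x - z x) = (1 - α) * stdNormalCDF (-x) := by
    rw [hz x]; ring
  have h3 : (1 - α) * (g (-x) / (4 * x)) ≤ z x * g (-x) := by
    calc (1 - α) * (g (-x) / (4 * x)) ≤ (1 - α) * stdNormalCDF (-x) := by
          exact mul_le_mul_of_nonneg_left h2 (by linarith)
      _ = stdNormalCDF (-x) - stdNormalCDF (-x - z x) := heq.symm
      _ ≤ z x * g (-x) := h1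
  have h4 : (1 - α) / (4 * x) * g (-x) ≤ z x * g (-x) := by
    calc (1 - α) / (4 * x) * g (-x) = (1 - α) * (g (-x) / (4 * x)) := by ring
      _ ≤ z x * g (-x) := h3
  exact le_of_mul_le_mul_right h4 hgx
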